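/- Fix s ∈ {1,…,λ−1} and α_s ∈ F_{q^m}, and set F_s = f^{L_λ}·f^{M_s} − α_s·f^{M_λ}·f^{L_s} ∈ F_{q^m}[X_1,…,X_{λ−1}]. Then f_0^{q+1} divides F_s in F_{q^m}[X_1,…,X_{λ−1}], and the total degree of F_s is at most q^{λ+1} + q^{λ} + 2·Σ_{j=1}^{λ−1} q^{j} + 1 − q^{λ−s}. -/

import Mathlib

/-!
Write `f^I` as the determinant of the Moore-type matrix `(g_t ^ q ^ i_s)` with
`g = (1, X_1, …, X_{λ-1})`. For a linear factor `ℓ = X_i + ∑_{0<j<i} a_j X_j + a_0` of `f_0`,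
the map `x ↦ x ^ q ^ k` is additive and fixes the `a_j ∈ 𝔽_q`, so replacing `g_i` by `ℓ` is a
column operation and leaves the determinant unchanged. In the new matrix every entry of column `i`
is a power `ℓ ^ q ^ i_s`, hence `ℓ ^ q ^ i_1 ∣ f^I`. As `min L_λ = min M_λ = 1`, every `ℓ ^ (q+1)`
divides both products in `F_s`, and the factors of `f_0` are pairwise non-associated irreducibles
(of degree one), so `f_0 ^ (q+1) ∣ F_s`. Expanding the determinant, every term has degree at most
`∑_s q ^ i_s - q ^ i_1`, which gives the degree bound.
-/

noncomputable section
open MvPolynomial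

/-- `f^I = det(Mat^I)` where the `s`-th row of `Mat^I` is
`(1, X_1^{q^{i_s}}, X_2^{q^{i_s}}, …, X_{λ-1}^{q^{i_s}})`, the set
`I = {i_1 < ⋯ < i_λ}` being given by its (strictly increasing) enumeration `ι`. -/
def fI (q lam : ℕ) (F : Type) [CommRing F] (ι : Fin lam → ℕ) : MvPolynomial ℕ F :=
  Matrix.det (Matrix.of fun s t : Fin lam =>
    if (t : ℕ) = 0 then 1 else X (t : ℕ) ^ q ^ ι s)

/-- `f_0 = ∏_{a∈F_q}(X_1+a) · ∏_{i=2}^{λ-1} ∏_{a_0,…,a_{i-1}∈F_q}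
(X_i + ∑_{j=1}^{i-1} a_j X_j + a_0)`, where `F_q = {x | x^q = x}` is the subfield
with `q` elements. -/
def f0 (q lam : ℕ) (F : Type) [Field F] [Fintype F] [DecidableEq F] : MvPolynomial ℕ F :=
  (∏ a ∈ Finset.univ.filter (fun x : F => x ^ q = x), (X 1 + C a)) *
    ∏ i ∈ Finset.Icc 2 (lam - 1),
      ∏ a : Fin i → {x : F // x ^ q = x},
        (X i + ∑ j : Fin i, C (a j).val * if (j : ℕ) = 0 then 1 else X (j : ℕ))

/-- `J_s = {1,…,λ+1} \ {s+1}`. -/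
def Jset (lam s : ℕ) : Set ℕ := Set.Icc 1 (lam + 1) \ {s + 1}

/-- `L_s = {λ+1-t : t ∈ (J_s \ {1}) ∪ {0}}`. -/
def Lset (lam s : ℕ) : Set ℕ := (fun t => lam + 1 - t) '' ((Jset lam s \ {1}) ∪ {0})

/-- `M_s = {λ+1-t : t ∈ J_s}`. -/
def MsetJ (lam s : ℕ) : Set ℕ := (fun t => lam + 1 - t) '' Jset lam s

theorem Finset.prod_pow_dvd_of_irreducible {M ι : Type*} [CommMonoid M] [DecompositionMonoid M]
    {s : Finset ι} {f : ι → M} {z : M} (k : ℕ) (hirr : ∀ i ∈ s, Irreducible (f i))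
    (hdvd : (s : Set ι).Pairwise fun i j => ¬f i ∣ f j) (h : ∀ i ∈ s, f i ^ k ∣ z) :
    (∏ i ∈ s, f i) ^ k ∣ z := by
  rw [← Finset.prod_pow]
  exact Finset.prod_dvd_of_isRelPrime
    (fun i hi j hj hij => ((hirr i hi).isRelPrime_iff_not_dvd.2 (hdvd hi hj hij)).pow) h

theorem pow_pow_eq_self_of_pow_eq_self {M : Type*} [Monoid M] {x : M} {q : ℕ} (hx : x ^ q = x)
    (n : ℕ) : x ^ q ^ n = x := by
  induction n with
  | zero => simp
  | succ n ih => rw [pow_succ, pow_mul, ih, hx]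

section Moore

variable {R n : Type*} [CommRing R]

def mooreMatrix (q : ℕ) (ι : n → ℕ) (g : n → R) : Matrix n n R :=
  Matrix.of fun s t => g t ^ q ^ ι s

theorem mooreMatrix_update [DecidableEq n] (q : ℕ) (ι : n → ℕ) (g : n → R) (i : n) (x : R) :
    mooreMatrix q ι (Function.update g i x) =
      (mooreMatrix q ι g).updateCol i fun s => x ^ q ^ ι s := by
  ext s t
  by_cases h : t = i
  · subst h; simp [mooreMatrix]
  · simp [mooreMatrix, h]

theorem pow_pow_dvd_det_mooreMatrix [Fintype n] [DecidableEq n] {q v : ℕ} (hq : 0 < q)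
    {ι : n → ℕ} (hv : ∀ s, v ≤ ι s) (g : n → R) (i : n) :
    g i ^ q ^ v ∣ (mooreMatrix q ι g).det := by
  rw [Matrix.det_apply']
  refine Finset.dvd_sum fun σ _ => Dvd.dvd.mul_left ?_ _
  exact (pow_dvd_pow _ (Nat.pow_le_pow_right hq (hv (σ i)))).trans
    (Finset.dvd_prod_of_mem (fun t => mooreMatrix q ι g (σ t) t) (Finset.mem_univ i))

variable {p e q : ℕ} [ExpChar R p]

theorem sum_mul_pow_pow_eq [Fintype n] (hq : q = p ^ e) {c : n → R} (hc : ∀ k, c k ^ q = c k)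
    (g : n → R) (m : ℕ) : (∑ k, c k * g k) ^ q ^ m = ∑ k, c k * g k ^ q ^ m := by
  have hqm : q ^ m = p ^ (e * m) := by rw [hq, pow_mul]
  rw [hqm, sum_pow_char_pow]
  simp only [mul_pow, ← hqm, pow_pow_eq_self_of_pow_eq_self (hc _)]

theorem det_mooreMatrix_update_sum [Fintype n] [DecidableEq n] (hq : q = p ^ e) (ι : n → ℕ)
    (g : n → R) {c : n → R} (hc : ∀ k, c k ^ q = c k) {i : n} (hi : c i = 1) :
    (mooreMatrix q ι (Function.update g i (∑ k, c k * g k))).det = (mooreMatrix q ι g).det := by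
  rw [mooreMatrix_update]
  simp_rw [sum_mul_pow_pow_eq hq hc]
  simpa [mooreMatrix, hi] using Matrix.det_updateCol_sum (mooreMatrix q ι g) i c

end Moore

section AffineCoord

variable {R : Type} [CommRing R]

def affineCoord (R : Type) [CommRing R] (j : ℕ) : MvPolynomial ℕ R := if j = 0 then 1 else X j

def affineExp (j : ℕ) : ℕ →₀ ℕ := if j = 0 then 0 else Finsupp.single j 1

theorem affineCoord_eq_monomial (j : ℕ) : affineCoord R j = monomial (affineExp j) 1 := by
  unfold affineCoord affineExp
  split_ifs <;> simp [X]

theorem affineExp_inj {j k : ℕ} : affineExp j = affineExp k ↔ j = k := by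
  unfold affineExp
  split_ifs with hj hk hk
  · simp [hj, hk]
  · simp [hj, Ne.symm hk, eq_comm (a := (0 : ℕ →₀ ℕ))]
  · simp [hj, hk]
  · exact Finsupp.single_left_inj one_ne_zero

theorem coeff_affineExp_affineCoord (j k : ℕ) :
    coeff (affineExp k) (affineCoord R j) = if j = k then 1 else 0 := by
  rw [affineCoord_eq_monomial, coeff_monomial]
  simp only [affineExp_inj]

theorem totalDegree_affineCoord_le (j : ℕ) :
    (affineCoord R j).totalDegree ≤ if j = 0 then 0 else 1 := by
  rw [affineCoord_eq_monomial]
  refine (totalDegree_monomial_le _ _).trans ?_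
  unfold affineExp
  split_ifs <;> simp

end AffineCoord

section fI

variable {R : Type} [CommRing R] {q lam : ℕ}

theorem fI_eq_det_mooreMatrix (ι : Fin lam → ℕ) :
    fI q lam R ι = (mooreMatrix q ι fun t : Fin lam => affineCoord R t).det := by
  unfold fI mooreMatrix affineCoord
  congr 1
  ext s t : 1
  simp only [Matrix.of_apply]
  split_ifs <;> simp

theorem MvPolynomial.totalDegree_units_int_smul (u : ℤˣ) (x : MvPolynomial ℕ R) :
    (u • x).totalDegree = x.totalDegree := by
  rcases Int.units_eq_one_or u with rfl | rfl <;> simp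

theorem totalDegree_fI_add_le [NeZero lam] {ι : Fin lam → ℕ} {v : ℕ} (hq : 0 < q)
    (hv : ∀ s, v ≤ ι s) : (fI q lam R ι).totalDegree + q ^ v ≤ ∑ s, q ^ ι s := by
  rw [fI_eq_det_mooreMatrix, Matrix.det_apply]
  set M := mooreMatrix q ι fun t : Fin lam => affineCoord R t
  have hentry (s t : Fin lam) :
      (M s t).totalDegree + (if t = 0 then q ^ ι s else 0) ≤ q ^ ι s := by
    have h := (totalDegree_pow (affineCoord R t) (q ^ ι s)).trans
      (Nat.mul_le_mul_left (q ^ ι s) (totalDegree_affineCoord_le (R := R) t))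
    simp only [M, mooreMatrix, Matrix.of_apply, Fin.val_eq_zero_iff] at h ⊢
    split_ifs at h ⊢ <;> simp_all
  have hterm (σ : Equiv.Perm (Fin lam)) :
      (∏ t, M (σ t) t).totalDegree + q ^ v ≤ ∑ s, q ^ ι s :=
    calc (∏ t, M (σ t) t).totalDegree + q ^ v
        ≤ ∑ t, (M (σ t) t).totalDegree + ∑ t, (if t = 0 then q ^ ι (σ t) else 0) := by
          gcongr
          · exact totalDegree_finsetProd _ _
          · simpa using Nat.pow_le_pow_right hq (hv (σ 0))
      _ ≤ ∑ t, q ^ ι (σ t) := by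
          rw [← Finset.sum_add_distrib]
          exact Finset.sum_le_sum fun t _ => hentry _ _
      _ = ∑ s, q ^ ι s := Equiv.sum_comp σ fun s => q ^ ι s
  obtain ⟨σ, -, hσ⟩ := Finset.exists_mem_eq_sup Finset.univ Finset.univ_nonempty
    fun σ : Equiv.Perm (Fin lam) => (∏ t, M (σ t) t).totalDegree
  have hsum : (∑ σ, Equiv.Perm.sign σ • ∏ t, M (σ t) t).totalDegree ≤
      (∏ t, M (σ t) t).totalDegree := by
    refine (totalDegree_finsetSum _ _).trans ?_
    simp only [totalDegree_units_int_smul, hσ, le_refl]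
  exact (Nat.add_le_add_right hsum _).trans (hterm σ)

end fI

theorem Fin.sum_univ_dite_val_lt {M : Type*} [AddCommMonoid M] {i n : ℕ} (hin : i ≤ n)
    (f : Fin i → M) : ∑ k : Fin n, (if h : (k : ℕ) < i then f ⟨k, h⟩ else 0) = ∑ j, f j :=
  (Fintype.sum_of_injective (Fin.castLE hin) (Fin.castLE_injective hin) f _
    (fun k hk => dif_neg fun h => hk ⟨⟨k, h⟩, rfl⟩)
    fun j => by rw [dif_pos (show (Fin.castLE hin j : ℕ) < i from j.isLt)]; rfl).symm

theorem MvPolynomial.exists_C_mul_eq_of_associated {σ R : Type*} [CommRing R] [IsReduced R]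
    {p p' : MvPolynomial σ R} (h : Associated p p') : ∃ r, p' = C r * p := by
  obtain ⟨u, hu⟩ := h
  obtain ⟨r, -, hr⟩ := isUnit_iff_eq_C_of_isReduced.mp u.isUnit
  exact ⟨r, by rw [← hu, hr, mul_comm]⟩

section LinForm

variable {K : Type} [Field K] {q i : ℕ}

def linForm (q : ℕ) (K : Type) [Field K] (i : ℕ) (a : Fin i → {x : K // x ^ q = x}) :
    MvPolynomial ℕ K :=
  X i + ∑ j : Fin i, C (a j).val * affineCoord K j

theorem coeff_affineExp_linForm (hi : i ≠ 0) (a : Fin i → {x : K // x ^ q = x}) (k : ℕ) :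
    coeff (affineExp k) (linForm q K i a) =
      (if i = k then 1 else 0) + ∑ j : Fin i, if (j : ℕ) = k then (a j).val else 0 := by
  have hX : (X i : MvPolynomial ℕ K) = affineCoord K i := by simp [affineCoord, hi]
  simp [linForm, hX, coeff_sum, coeff_C_mul, coeff_affineExp_affineCoord]

theorem coeff_affineExp_self_linForm (hi : i ≠ 0) (a : Fin i → {x : K // x ^ q = x}) :
    coeff (affineExp i) (linForm q K i a) = 1 := by
  simp [coeff_affineExp_linForm hi, fun j : Fin i => j.isLt.ne]

theorem coeff_affineExp_linForm_of_lt (hi : i ≠ 0) (a : Fin i → {x : K // x ^ q = x}) {k : ℕ}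
    (hik : i < k) : coeff (affineExp k) (linForm q K i a) = 0 := by
  simp [coeff_affineExp_linForm hi, hik.ne, fun j : Fin i => (j.isLt.trans hik).ne]

theorem coeff_affineExp_val_linForm (hi : i ≠ 0) (a : Fin i → {x : K // x ^ q = x}) (j : Fin i) :
    coeff (affineExp j) (linForm q K i a) = (a j).val := by
  simp [coeff_affineExp_linForm hi, j.isLt.ne', Fin.val_inj]

theorem totalDegree_linForm (hi : i ≠ 0) (a : Fin i → {x : K // x ^ q = x}) :
    (linForm q K i a).totalDegree = 1 := by
  refine le_antisymm ?_ ?_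
  · refine (totalDegree_add _ _).trans (max_le (totalDegree_X (R := K) i).le ?_)
    refine (totalDegree_finsetSum _ _).trans (Finset.sup_le fun j _ => ?_)
    refine (totalDegree_mul _ _).trans ?_
    rw [totalDegree_C, zero_add]
    exact (totalDegree_affineCoord_le (R := K) _).trans (by split_ifs <;> simp)
  · have := le_totalDegree (p := linForm q K i a) (s := affineExp i)
      (by rw [mem_support_iff, coeff_affineExp_self_linForm hi]; exact one_ne_zero)
    simpa [affineExp, hi] using this

theorem irreducible_linForm (hi : i ≠ 0) (a : Fin i → {x : K // x ^ q = x}) :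
    Irreducible (linForm q K i a) :=
  irreducible_of_totalDegree_eq_one (totalDegree_linForm hi a) fun _ hx =>
    isUnit_of_dvd_one (coeff_affineExp_self_linForm hi a ▸ hx (affineExp i))

theorem le_of_associated_linForm {i' : ℕ} (hi : i ≠ 0) (hi' : i' ≠ 0)
    {a : Fin i → {x : K // x ^ q = x}} {a' : Fin i' → {x : K // x ^ q = x}}
    (h : Associated (linForm q K i a) (linForm q K i' a')) : i' ≤ i := by
  obtain ⟨r, hr⟩ := exists_C_mul_eq_of_associated h
  by_contra! hlt
  have := congrArg (coeff (affineExp i')) hr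
  rw [coeff_C_mul, coeff_affineExp_self_linForm hi', coeff_affineExp_linForm_of_lt hi a hlt]
    at this
  exact one_ne_zero (this.trans (mul_zero r))

theorem sigma_eq_of_associated_linForm {i' : ℕ} (hi : i ≠ 0) (hi' : i' ≠ 0)
    {a : Fin i → {x : K // x ^ q = x}} {a' : Fin i' → {x : K // x ^ q = x}}
    (h : Associated (linForm q K i a) (linForm q K i' a')) :
    (⟨i, a⟩ : Σ i, Fin i → {x : K // x ^ q = x}) = ⟨i', a'⟩ := by
  obtain rfl := le_antisymm (le_of_associated_linForm hi' hi h.symm)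
    (le_of_associated_linForm hi hi' h)
  obtain ⟨r, hr⟩ := exists_C_mul_eq_of_associated h
  have hr1 : r = 1 := by
    simpa [coeff_C_mul, coeff_affineExp_self_linForm hi] using
      (congrArg (coeff (affineExp i)) hr).symm
  rw [hr1, C_1, one_mul] at hr
  congr
  funext j
  apply Subtype.ext
  simpa [coeff_affineExp_val_linForm hi] using (congrArg (coeff (affineExp j)) hr).symm

theorem f0_eq_prod_linForm [Fintype K] [DecidableEq K] {lam : ℕ} (hlam : 2 ≤ lam) :
    f0 q lam K =
      ∏ x ∈ (Finset.Icc 1 (lam - 1)).sigma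
        fun i => (Finset.univ : Finset (Fin i → {x : K // x ^ q = x})), linForm q K x.1 x.2 := by
  have hIcc : Finset.Icc 1 (lam - 1) = insert 1 (Finset.Icc 2 (lam - 1)) := by
    ext; simp; omega
  rw [Finset.prod_sigma, hIcc, Finset.prod_insert (by simp), f0]
  congr 1
  calc ∏ x ∈ Finset.univ.filter (fun x : K => x ^ q = x), (X 1 + C x)
      = ∏ x : {x : K // x ^ q = x}, (X 1 + C x.val) :=
        Finset.prod_subtype _ (by simp) fun x => X 1 + C x
    _ = ∏ b : Fin 1 → {x : K // x ^ q = x}, linForm q K 1 b := by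
        rw [← (Equiv.funUnique (Fin 1) _).prod_comp]
        simp [linForm, affineCoord]

theorem f0_pow_dvd [Fintype K] [DecidableEq K] {lam k : ℕ} (hlam : 2 ≤ lam)
    {z : MvPolynomial ℕ K} (h : ∀ i, i ≠ 0 → i < lam → ∀ a, linForm q K i a ^ k ∣ z) :
    f0 q lam K ^ k ∣ z := by
  have hmem : ∀ x ∈ (Finset.Icc 1 (lam - 1)).sigma
      fun i => (Finset.univ : Finset (Fin i → {x : K // x ^ q = x})), x.1 ≠ 0 ∧ x.1 < lam := by
    rintro ⟨i, a⟩ hx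
    simp only [Finset.mem_sigma, Finset.mem_Icc] at hx
    dsimp only
    omega
  rw [f0_eq_prod_linForm hlam]
  refine Finset.prod_pow_dvd_of_irreducible k (fun x hx => irreducible_linForm (hmem x hx).1 x.2)
    ?_ fun x hx => h x.1 (hmem x hx).1 (hmem x hx).2 x.2
  intro x hx y hy hxy hdvd
  exact hxy (sigma_eq_of_associated_linForm (hmem x hx).1 (hmem y hy).1
    ((irreducible_linForm (hmem x hx).1 x.2).associated_of_dvd
      (irreducible_linForm (hmem y hy).1 y.2) hdvd))

theorem exists_sum_eq_linForm {lam : ℕ} (hq : q ≠ 0) (hi : i ≠ 0) (hil : i < lam)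
    (a : Fin i → {x : K // x ^ q = x}) :
    ∃ c : Fin lam → MvPolynomial ℕ K, (∀ k, c k ^ q = c k) ∧ c ⟨i, hil⟩ = 1 ∧
      ∑ k, c k * affineCoord K k = linForm q K i a := by
  refine ⟨fun k => if (k : ℕ) = i then 1 else if h : (k : ℕ) < i then C (a ⟨k, h⟩).val else 0,
    fun k => ?_, by simp, ?_⟩
  · dsimp only
    split_ifs
    · exact one_pow q
    · rw [← C_pow, (a _).2]
    · exact zero_pow hq
  · have hterm (k : Fin lam) :
        (if (k : ℕ) = i then 1 else if h : (k : ℕ) < i then C (a ⟨k, h⟩).val else 0) *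
            affineCoord K k =
          (if k = ⟨i, hil⟩ then X i else 0) +
            if h : (k : ℕ) < i then C (a ⟨k, h⟩).val * affineCoord K k else 0 := by
      by_cases hk : (k : ℕ) = i
      · obtain rfl : k = ⟨i, hil⟩ := Fin.ext hk
        simp [affineCoord, hi]
      · have hk' : k ≠ ⟨i, hil⟩ := fun h => hk (congrArg Fin.val h)
        split_ifs <;> simp_all
    rw [Finset.sum_congr rfl fun k _ => hterm k, Finset.sum_add_distrib, Fintype.sum_ite_eq',
      Fin.sum_univ_dite_val_lt hil.le fun j => C (a j).val * affineCoord K j]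
    rfl

theorem linForm_pow_dvd_fI {p e : ℕ} [Fact p.Prime] [CharP K p] (hq : q = p ^ e) {lam v : ℕ}
    {ι : Fin lam → ℕ} (hv : ∀ s, v ≤ ι s) (hi : i ≠ 0) (hil : i < lam)
    (a : Fin i → {x : K // x ^ q = x}) : linForm q K i a ^ q ^ v ∣ fI q lam K ι := by
  have hq0 : 0 < q := hq ▸ pow_pos (Fact.out : p.Prime).pos e
  obtain ⟨c, hc, hci, hsum⟩ := exists_sum_eq_linForm (lam := lam) hq0.ne' hi hil a
  rw [fI_eq_det_mooreMatrix, ← det_mooreMatrix_update_sum hq ι _ hc hci, hsum]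
  simpa using pow_pow_dvd_det_mooreMatrix hq0 hv
    (Function.update (fun t : Fin lam => affineCoord K t) ⟨i, hil⟩ (linForm q K i a)) ⟨i, hil⟩

theorem f0_pow_pow_dvd_fI [Fintype K] [DecidableEq K] {p e : ℕ} [Fact p.Prime] [CharP K p]
    (hq : q = p ^ e) {lam v : ℕ} (hlam : 2 ≤ lam) {ι : Fin lam → ℕ} (hv : ∀ s, v ≤ ι s) :
    f0 q lam K ^ q ^ v ∣ fI q lam K ι :=
  f0_pow_dvd hlam fun _ hi hil a => linForm_pow_dvd_fI hq hv hi hil a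

theorem f0_pow_succ_dvd_fI_mul_fI [Fintype K] [DecidableEq K] {p e : ℕ} [Fact p.Prime]
    [CharP K p] (hq : q = p ^ e) {lam : ℕ} (hlam : 2 ≤ lam) {ι ι' : Fin lam → ℕ}
    (hι : ∀ s, 1 ≤ ι s) : f0 q lam K ^ (q + 1) ∣ fI q lam K ι * fI q lam K ι' := by
  rw [pow_succ]
  exact mul_dvd_mul (by simpa using f0_pow_pow_dvd_fI hq hlam hι)
    (by simpa using f0_pow_pow_dvd_fI (v := 0) hq hlam fun _ => Nat.zero_le _)

end LinForm

section IndexSets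

variable {lam s : ℕ}

theorem MsetJ_eq (hs : s ≤ lam) :
    MsetJ lam s = ↑((Finset.range (lam + 1)).erase (lam - s)) := by
  ext x
  simp only [MsetJ, Jset, Set.mem_image, Set.mem_sdiff, Set.mem_Icc, Set.mem_singleton_iff,
    Finset.coe_erase, Finset.coe_range, Set.mem_Iio]
  constructor
  · rintro ⟨t, ht, rfl⟩
    omega
  · intro hx
    exact ⟨lam + 1 - x, by omega, by omega⟩

theorem Lset_eq (hs1 : 1 ≤ s) (hs : s ≤ lam) :
    Lset lam s = ↑(insert (lam + 1) ((Finset.range lam).erase (lam - s))) := by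
  ext x
  simp only [Lset, Jset, Set.mem_image, Set.mem_union, Set.mem_sdiff, Set.mem_Icc,
    Set.mem_singleton_iff, Finset.coe_insert, Finset.coe_erase, Finset.coe_range,
    Set.mem_insert_iff, Set.mem_Iio]
  constructor
  · rintro ⟨t, ht, rfl⟩
    omega
  · rintro (rfl | hx)
    · exact ⟨0, by omega, by omega⟩
    · exact ⟨lam + 1 - x, by omega, by omega⟩

theorem one_le_of_mem_MsetJ_self {x : ℕ} (hx : x ∈ MsetJ lam lam) : 1 ≤ x := by
  simp only [MsetJ, Jset, Set.mem_image, Set.mem_sdiff, Set.mem_Icc, Set.mem_singleton_iff] at hx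
  omega

theorem one_le_of_mem_Lset_self {x : ℕ} (hx : x ∈ Lset lam lam) : 1 ≤ x := by
  simp only [Lset, Jset, Set.mem_image, Set.mem_union, Set.mem_sdiff, Set.mem_Icc,
    Set.mem_singleton_iff] at hx
  omega

theorem Fintype.sum_comp_of_range_eq {M ι : Type*} [AddCommMonoid M] [Fintype ι] {e : ι → ℕ}
    (he : Function.Injective e) {T : Finset ℕ} (h : Set.range e = T) (f : ℕ → M) :
    ∑ i, f (e i) = ∑ x ∈ T, f x := by
  have hT : T = Finset.univ.image e := by
    rw [← Finset.coe_inj, Finset.coe_image, Finset.coe_univ, Set.image_univ, h]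
  rw [hT, Finset.sum_image fun _ _ _ _ hxy => he hxy]

theorem sum_pow_add_of_range_eq_MsetJ {ι : Fin lam → ℕ} (hι : Function.Injective ι)
    (h : Set.range ι = MsetJ lam s) (hs : s ≤ lam) (q : ℕ) :
    ∑ t, q ^ ι t + q ^ (lam - s) = ∑ x ∈ Finset.range lam, q ^ x + q ^ lam := by
  rw [Fintype.sum_comp_of_range_eq hι (h.trans (MsetJ_eq hs)),
    Finset.sum_erase_add _ _ (by simp only [Finset.mem_range]; omega), Finset.sum_range_succ]

theorem sum_pow_add_of_range_eq_Lset {ι : Fin lam → ℕ} (hι : Function.Injective ι)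
    (h : Set.range ι = Lset lam s) (hs1 : 1 ≤ s) (hs : s ≤ lam) (q : ℕ) :
    ∑ t, q ^ ι t + q ^ (lam - s) = ∑ x ∈ Finset.range lam, q ^ x + q ^ (lam + 1) := by
  rw [Fintype.sum_comp_of_range_eq hι (h.trans (Lset_eq hs1 hs)),
    Finset.sum_insert (by simp), add_assoc,
    Finset.sum_erase_add _ _ (by simp only [Finset.mem_range]; omega), add_comm]

theorem sum_range_pow_eq (hlam : 1 ≤ lam) (q : ℕ) :
    ∑ x ∈ Finset.range lam, q ^ x = 1 + ∑ j ∈ Finset.Icc 1 (lam - 1), q ^ j := by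
  have hrange : Finset.range lam = insert 0 (Finset.Icc 1 (lam - 1)) := by
    ext
    simp only [Finset.mem_range, Finset.mem_insert, Finset.mem_Icc]
    omega
  rw [hrange, Finset.sum_insert (by simp), pow_zero]

variable {R : Type} [CommRing R] {q : ℕ} [NeZero lam]

theorem totalDegree_fI_add_le_of_range_eq_MsetJ (hq : 0 < q) {ι : Fin lam → ℕ}
    (hι : Function.Injective ι) (h : Set.range ι = MsetJ lam s) (hs : s ≤ lam) {v : ℕ}
    (hv : ∀ t, v ≤ ι t) :
    (fI q lam R ι).totalDegree + q ^ v + q ^ (lam - s) ≤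
      ∑ x ∈ Finset.range lam, q ^ x + q ^ lam :=
  sum_pow_add_of_range_eq_MsetJ hι h hs q ▸ Nat.add_le_add_right (totalDegree_fI_add_le hq hv) _

theorem totalDegree_fI_add_le_of_range_eq_Lset (hq : 0 < q) {ι : Fin lam → ℕ}
    (hι : Function.Injective ι) (h : Set.range ι = Lset lam s) (hs1 : 1 ≤ s) (hs : s ≤ lam)
    {v : ℕ} (hv : ∀ t, v ≤ ι t) :
    (fI q lam R ι).totalDegree + q ^ v + q ^ (lam - s) ≤
      ∑ x ∈ Finset.range lam, q ^ x + q ^ (lam + 1) :=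
  sum_pow_add_of_range_eq_Lset hι h hs1 hs q ▸ Nat.add_le_add_right (totalDegree_fI_add_le hq hv) _

end IndexSets

theorem MvPolynomial.totalDegree_mul_sub_C_mul_mul_le {σ R : Type*} [CommRing R]
    (a b c d : MvPolynomial σ R) (r : R) :
    (a * b - C r * (c * d)).totalDegree ≤
      max (a.totalDegree + b.totalDegree) (c.totalDegree + d.totalDegree) := by
  refine (totalDegree_sub _ _).trans (max_le_max (totalDegree_mul _ _) ?_)
  refine (totalDegree_mul _ _).trans ?_
  rw [totalDegree_C, zero_add]
  exact totalDegree_mul _ _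

theorem stmt18_general (q m lam : ℕ) (hq : ∃ p e : ℕ, p.Prime ∧ 0 < e ∧ q = p ^ e)
    (hlam : 2 ≤ lam)
    (K : Type) [Field K] [Fintype K] [DecidableEq K] (hcard : Fintype.card K = q ^ m)
    (s : ℕ) (hs1 : 1 ≤ s) (hs2 : s ≤ lam - 1) (α : K)
    (ιLs ιMs ιLlam ιMlam : Fin lam → ℕ)
    (hLs : StrictMono ιLs) (hLs' : Set.range ιLs = Lset lam s)
    (hMs : StrictMono ιMs) (hMs' : Set.range ιMs = MsetJ lam s)
    (hLl : StrictMono ιLlam) (hLl' : Set.range ιLlam = Lset lam lam)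
    (hMl : StrictMono ιMlam) (hMl' : Set.range ιMlam = MsetJ lam lam)
    (Fs : MvPolynomial ℕ K)
    (hFs : Fs = fI q lam K ιLlam * fI q lam K ιMs -
      C α * (fI q lam K ιMlam * fI q lam K ιLs)) :
    f0 q lam K ^ (q + 1) ∣ Fs ∧
    Fs.totalDegree ≤
      q ^ (lam + 1) + q ^ lam + 2 * (∑ j ∈ Finset.Icc 1 (lam - 1), q ^ j) + 1 -
        q ^ (lam - s) := by
  obtain ⟨p, e, hp, -, hqpe⟩ := hq
  have := Fact.mk hp
  have : CharP K p := charP_of_card_eq_prime_pow (hcard.trans (by rw [hqpe, ← pow_mul]))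
  have hq0 : 0 < q := hqpe ▸ pow_pos hp.pos e
  have hLl1 (t : Fin lam) : 1 ≤ ιLlam t := one_le_of_mem_Lset_self (hLl' ▸ Set.mem_range_self t)
  have hMl1 (t : Fin lam) : 1 ≤ ιMlam t := one_le_of_mem_MsetJ_self (hMl' ▸ Set.mem_range_self t)
  refine ⟨?_, ?_⟩
  · rw [hFs]
    exact dvd_sub (f0_pow_succ_dvd_fI_mul_fI hqpe hlam hLl1)
      ((f0_pow_succ_dvd_fI_mul_fI hqpe hlam hMl1).mul_left _)
  · have : NeZero lam := ⟨by omega⟩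
    have h0 (ι : Fin lam → ℕ) (t : Fin lam) : 0 ≤ ι t := Nat.zero_le _
    have dLl := totalDegree_fI_add_le_of_range_eq_Lset (R := K) hq0 hLl.injective hLl'
      (by omega) le_rfl hLl1
    have dMs := totalDegree_fI_add_le_of_range_eq_MsetJ (R := K) hq0 hMs.injective hMs'
      (by omega) (h0 ιMs)
    have dMl := totalDegree_fI_add_le_of_range_eq_MsetJ (R := K) hq0 hMl.injective hMl'
      le_rfl hMl1
    have dLs := totalDegree_fI_add_le_of_range_eq_Lset (R := K) hq0 hLs.injective hLs' hs1
      (by omega) (h0 ιLs)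
    have hrange := sum_range_pow_eq (by omega : 1 ≤ lam) q
    have hdeg := hFs ▸ totalDegree_mul_sub_C_mul_mul_le (fI q lam K ιLlam) (fI q lam K ιMs)
      (fI q lam K ιMlam) (fI q lam K ιLs) α
    simp only [Nat.sub_self, pow_zero, pow_one] at dLl dMs dMl dLs
    omega

/-- `f_0^{q+1}` divides `F_s`, and
`deg F_s ≤ q^{λ+1} + q^λ + 2∑_{j=1}^{λ-1} q^j + 1 - q^{λ-s}`. -/
theorem stmt18 (q m lam : ℕ) (hq : ∃ p e : ℕ, p.Prime ∧ 0 < e ∧ q = p ^ e)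
    (hm : 0 < m) (hlam : 2 ≤ lam)
    (K : Type) [Field K] [Fintype K] [DecidableEq K] (hcard : Fintype.card K = q ^ m)
    (s : ℕ) (hs1 : 1 ≤ s) (hs2 : s ≤ lam - 1) (α : K)
    (ιLs ιMs ιLlam ιMlam : Fin lam → ℕ)
    (hLs : StrictMono ιLs) (hLs' : Set.range ιLs = Lset lam s)
    (hMs : StrictMono ιMs) (hMs' : Set.range ιMs = MsetJ lam s)
    (hLl : StrictMono ιLlam) (hLl' : Set.range ιLlam = Lset lam lam)
    (hMl : StrictMono ιMlam) (hMl' : Set.range ιMlam = MsetJ lam lam)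
    (Fs : MvPolynomial ℕ K)
    (hFs : Fs = fI q lam K ιLlam * fI q lam K ιMs -
      C α * (fI q lam K ιMlam * fI q lam K ιLs)) :
    f0 q lam K ^ (q + 1) ∣ Fs ∧
    Fs.totalDegree ≤
      q ^ (lam + 1) + q ^ lam + 2 * (∑ j ∈ Finset.Icc 1 (lam - 1), q ^ j) + 1 -
        q ^ (lam - s) :=
  stmt18_general q m lam hq hlam K hcard s hs1 hs2 α ιLs ιMs ιLlam ιMlam hLs hLs' hMs hMs' hLl hLl'
    hMl hMl' Fs hFs

end
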